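/- For every d ≥ 2 there exists p* < 1 such that for Bernoulli bond percolation on B_d(n) with parameter p > p*, there exist constants c_1 > 0 and c_2 > 0 such that asymptotically almost surely every minimal cutset B separating some pair of vertices of B_d(n), with |B| ≥ c_1 log n, contains at least c_2 |B| open edges. -/

import Mathlib

/-!
A minimal cutset `B` is connected for the relation "the two edges lie on a common unit square".
Otherwise the `ℤ/2`-indicator of a square-component of `B` would still be closed around every unit
square of the box, hence (the box being simply connected) the gradient of a potential; this
potential would have to differ between the sides of `v` and `w` across that component, yet agree
across the rest of `B`.

A connected set of `m` edges is the vertex set of a walk with `2m - 2` steps in a graph of degree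
`3^d d`, so there are at most `|E| (3^d d)^(2m-2)` of them, while a fixed set of `m` edges has fewer
than `m/2` open edges with probability at most `(2 √(1-p))^m`. For `p` close to `1` the union bound
over connected sets of size at least `(2d+1) log n` is `O(1/n)`; so `c₁ = 2d + 1`, `c₂ = 1/2`.
-/

open MeasureTheory Filter
open scoped ENNReal Classical

noncomputable section

/-- Vertices of `ℤ^d`. -/
abbrev Vert (d : ℕ) := Fin d → ℤ

/-- (Oriented) edges of `ℤ^d`: `(v, i)` is the edge from `v` to `v + eᵢ`. -/
abbrev EdgeZ (d : ℕ) := Vert d × Fin d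

def unitVec (d : ℕ) (i : Fin d) : Vert d := fun j => if j = i then 1 else 0

/-- Second endpoint of an edge. -/
def edgeSnd {d : ℕ} (e : EdgeZ d) : Vert d := e.1 + unitVec d e.2

/-- The box `{-n, …, n}^d`. -/
def boxFinset (d n : ℕ) : Finset (Vert d) :=
  Fintype.piFinset fun _ => Finset.Icc (-(n : ℤ)) (n : ℤ)

/-- The edges of the box `B_d(n)`. -/
def boxEdgeFinset (d n : ℕ) : Finset (EdgeZ d) :=
  (boxFinset d n ×ˢ (Finset.univ : Finset (Fin d))).filter fun e => edgeSnd e ∈ boxFinset d n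

/-- ℓ¹ distance on `ℤ^d`. -/
def l1dist {d : ℕ} (v w : Vert d) : ℤ := ∑ i, |v i - w i|

/-- Lattice adjacency: ℓ¹ distance one. -/
def latAdj {d : ℕ} (v w : Vert d) : Prop := l1dist v w = 1

/-- Bernoulli(p) measure on `Bool`. -/
def bern (p : ℝ) : Measure Bool :=
  (PMF.bernoulli (min (Real.toNNReal p) 1) (min_le_right _ _)).toMeasure

instance (p : ℝ) : IsProbabilityMeasure (bern p) := by
  unfold bern; infer_instance

/-- Bernoulli bond percolation on the box `B_d(n)`: the edges of the box are
open independently with probability `p`; edges outside the box are closed. -/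
def bondMeasure (d n : ℕ) (p : ℝ) : Measure (EdgeZ d → Bool) :=
  (Measure.pi fun _ : {e // e ∈ boxEdgeFinset d n} => bern p).map
    fun ω e => if h : e ∈ boxEdgeFinset d n then ω ⟨e, h⟩ else false

/-- Bernoulli site percolation on the box `B_d(n)`. -/
def siteMeasure (d n : ℕ) (p : ℝ) : Measure (Vert d → Bool) :=
  (Measure.pi fun _ : {v // v ∈ boxFinset d n} => bern p).map
    fun η v => if h : v ∈ boxFinset d n then η ⟨v, h⟩ else false

/-- Two vertices joined by an open edge of the box `B_d(n)`. -/
def openAdj (d n : ℕ) (ω : EdgeZ d → Bool) (v w : Vert d) : Prop :=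
  ∃ e ∈ boxEdgeFinset d n, ω e = true ∧
    ((e.1 = v ∧ edgeSnd e = w) ∨ (e.1 = w ∧ edgeSnd e = v))

/-- Connectivity by open edges inside the box. -/
def openConn (d n : ℕ) (ω : EdgeZ d → Bool) : Vert d → Vert d → Prop :=
  Relation.ReflTransGen (openAdj d n ω)

/-- The open cluster of `v` inside the box `B_d(n)`. -/
def cluster (d n : ℕ) (ω : EdgeZ d → Bool) (v : Vert d) : Finset (Vert d) :=
  (boxFinset d n).filter fun w => openConn d n ω v w

/-- Number of open edges with both endpoints in `C`. -/
def openEdgeCount (d n : ℕ) (ω : EdgeZ d → Bool) (C : Finset (Vert d)) : ℕ :=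
  ((boxEdgeFinset d n).filter fun e => ω e = true ∧ e.1 ∈ C ∧ edgeSnd e ∈ C).card

def IsCluster (d n : ℕ) (ω : EdgeZ d → Bool) (C : Finset (Vert d)) : Prop :=
  ∃ v ∈ boxFinset d n, C = cluster d n ω v

/-- `C` is an open cluster of `B_d(n)` with the maximal number of open edges,
i.e. `C = 𝒞_d(n)`. -/
def IsLargestCluster (d n : ℕ) (ω : EdgeZ d → Bool) (C : Finset (Vert d)) : Prop :=
  IsCluster d n ω C ∧
    ∀ C', IsCluster d n ω C' → openEdgeCount d n ω C' ≤ openEdgeCount d n ω C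

/-- Number of open edges with one endpoint in `A` and the other in `B`. -/
def openEdgesBetween (d n : ℕ) (ω : EdgeZ d → Bool) (A B : Finset (Vert d)) : ℕ :=
  ((boxEdgeFinset d n).filter fun e => ω e = true ∧
    ((e.1 ∈ A ∧ edgeSnd e ∈ B) ∨ (e.1 ∈ B ∧ edgeSnd e ∈ A))).card

section WalkDefs

variable {V : Type*} [DecidableEq V]

/-- Degree of `x` in the graph with vertex set `C` and adjacency relation `R`. -/
def rDeg (R : V → V → Prop) (C : Finset V) (x : V) : ℕ := (C.filter fun w => R x w).card

/-- Sum of the degrees (twice the number of edges). -/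
def rTotal (R : V → V → Prop) (C : Finset V) : ℕ := ∑ x ∈ C, rDeg R C x

/-- Stationary probability of the set `A` for simple random walk: `π(A) = Σ_{x∈A} deg x / Σ_y deg y`. -/
def piSet (R : V → V → Prop) (C A : Finset V) : ℝ :=
  (∑ x ∈ A, (rDeg R C x : ℝ)) / (rTotal R C : ℝ)

/-- Stationary probability of a vertex: `π(x) = deg x / Σ_y deg y`. -/
def piVert (R : V → V → Prop) (C : Finset V) (x : V) : ℝ :=
  (rDeg R C x : ℝ) / (rTotal R C : ℝ)

/-- `Q(A,B)`: the number of edges from `A` to `B`, each with weight `1/Σ_y deg y`. -/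
def qBetween (R : V → V → Prop) (C A B : Finset V) : ℝ :=
  (∑ a ∈ A, ((B.filter fun b => R a b).card : ℝ)) / (rTotal R C : ℝ)

/-- Conductance `φ_A = Q(A, Aᶜ) / (π(A) π(Aᶜ))` of a set `A` in the graph `(C, R)`. -/
def conductance (R : V → V → Prop) (C A : Finset V) : ℝ :=
  qBetween R C A (C \ A) / (piSet R C A * piSet R C (C \ A))

/-- The Cheeger constant `φ = inf {φ_A : 0 < π(A) ≤ 1/2}`. -/
def cheeger (R : V → V → Prop) (C : Finset V) : ℝ :=
  sInf {r : ℝ | ∃ A : Finset V, A ⊆ C ∧ 0 < piSet R C A ∧ piSet R C A ≤ 1 / 2 ∧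
    r = conductance R C A}

/-- The size-restricted Cheeger constant `φ(x) = min {φ_A : 0 < π(A) ≤ x}`. -/
def cheegerAt (R : V → V → Prop) (C : Finset V) (x : ℝ) : ℝ :=
  sInf {r : ℝ | ∃ A : Finset V, A ⊆ C ∧ 0 < piSet R C A ∧ piSet R C A ≤ x ∧
    r = conductance R C A}

/-- A finite set `S` is connected for the relation `R` (within `S`). -/
def ConnectedOn (R : V → V → Prop) (S : Finset V) : Prop :=
  S.Nonempty ∧ ∀ v ∈ S, ∀ w ∈ S,
    Relation.ReflTransGen (fun a b => a ∈ S ∧ b ∈ S ∧ R a b) v w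

/-- The generator `Q` of continuous-time simple random walk on the graph `(C, R)`:
`Q_{xy} = 1/deg x` if `x ~ y`, `Q_{xx} = -1`, and `0` otherwise. -/
def walkGen (R : V → V → Prop) (C : Finset V) : Matrix {y // y ∈ C} {y // y ∈ C} ℝ :=
  Matrix.of fun x y =>
    if (x : V) = (y : V) then -1
    else if R (x : V) (y : V) then ((rDeg R C (x : V) : ℝ))⁻¹ else 0

end WalkDefs

/-- The heat kernel `π^t_x(y) = (exp (t Q))_{x y}` of the continuous-time walk. -/
def heatKernel {W : Type*} [Fintype W] [DecidableEq W] (Q : Matrix W W ℝ) (t : ℝ)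
    (x y : W) : ℝ :=
  ∑' k : ℕ, (t ^ k / (Nat.factorial k : ℝ)) * (Q ^ k) x y

/-- Total variation distance between two (densities of) measures on `W`. -/
def tvDist {W : Type*} [Fintype W] (f g : W → ℝ) : ℝ := (∑ x, |f x - g x|) / 2

/-- The total-variation mixing time
`τ₁ = inf {t : sup_{x,y} d_V(π^t_x, π^t_y) ≤ e⁻¹}`. -/
def mixTime {W : Type*} [Fintype W] [DecidableEq W] (Q : Matrix W W ℝ) : ℝ :=
  sInf {t : ℝ | 0 ≤ t ∧
    ∀ x y : W, tvDist (heatKernel Q t x) (heatKernel Q t y) ≤ Real.exp (-1)}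

/-- The second eigenvalue `λ₂ < 0` of the generator `Q`. -/
def lambda2 {W : Type*} [Fintype W] [DecidableEq W] (Q : Matrix W W ℝ) : ℝ :=
  sSup {l : ℝ | l < 0 ∧ Module.End.HasEigenvalue (Matrix.toLin' Q) l}

/-- The relaxation time `τ₂ = -1/λ₂`. -/
def relaxTime {W : Type*} [Fintype W] [DecidableEq W] (Q : Matrix W W ℝ) : ℝ :=
  -(lambda2 Q)⁻¹

/-- Mixing time of the simple random walk on a cluster `C` of bond percolation on `B_d(n)`. -/
def clusterMixTime (d n : ℕ) (ω : EdgeZ d → Bool) (C : Finset (Vert d)) : ℝ :=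
  mixTime (walkGen (openAdj d n ω) C)

/-- The event that the origin is connected to the boundary of the box `B_d(n)` by an
open path (inside the box). -/
def crossEvent (d n : ℕ) : Set (EdgeZ d → Bool) :=
  {ω | ∃ w ∈ boxFinset d n, (∃ i, |w i| = (n : ℤ)) ∧ openConn d n ω 0 w}

/-- `θ(p)`, the probability that the origin percolates: the decreasing limit of the
probabilities of crossing the box `B_d(n)`. -/
def theta (d : ℕ) (p : ℝ) : ℝ≥0∞ := ⨅ n : ℕ, bondMeasure d n p (crossEvent d n)

/-- The critical parameter `p_c(ℤ^d)` for Bernoulli bond percolation. -/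
def pc (d : ℕ) : ℝ := sSup {p : ℝ | 0 ≤ p ∧ p ≤ 1 ∧ theta d p = 0}

/-- `μ` is Bernoulli(p) bond percolation on all of `ℤ^d`: the cylinder events have the
right probabilities. -/
def IsBernoulliPerc (d : ℕ) (p : ℝ) (μ : Measure (EdgeZ d → Bool)) : Prop :=
  IsProbabilityMeasure μ ∧
    ∀ (s : Finset (EdgeZ d)) (f : EdgeZ d → Bool),
      μ {ω | ∀ e ∈ s, ω e = f e} =
        ∏ e ∈ s, (if f e then ENNReal.ofReal p else ENNReal.ofReal (1 - p))

/-- Adjacency by an open edge, anywhere in `ℤ^d`. -/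
def fullOpenAdj (d : ℕ) (ω : EdgeZ d → Bool) (v w : Vert d) : Prop :=
  ∃ e : EdgeZ d, ω e = true ∧ ((e.1 = v ∧ edgeSnd e = w) ∨ (e.1 = w ∧ edgeSnd e = v))

/-- The open cluster of `v` in the full lattice `ℤ^d`. -/
def fullCluster (d : ℕ) (ω : EdgeZ d → Bool) (v : Vert d) : Set (Vert d) :=
  {w | Relation.ReflTransGen (fullOpenAdj d ω) v w}

/-- Connectivity in `B_d(n)` avoiding the edges of `B`. -/
def avoidConn (d n : ℕ) (B : Finset (EdgeZ d)) : Vert d → Vert d → Prop :=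
  Relation.ReflTransGen fun a b => ∃ e ∈ boxEdgeFinset d n, e ∉ B ∧
    ((e.1 = a ∧ edgeSnd e = b) ∨ (e.1 = b ∧ edgeSnd e = a))

/-- `B` is a cutset of edges separating `v` from `w` in `B_d(n)`:
every path from `v` to `w` in `B_d(n)` uses an edge of `B`. -/
def IsCutset (d n : ℕ) (v w : Vert d) (B : Finset (EdgeZ d)) : Prop :=
  B ⊆ boxEdgeFinset d n ∧ ¬ avoidConn d n B v w

/-- A minimal cutset separating `v` from `w`. -/
def IsMinimalCutset (d n : ℕ) (v w : Vert d) (B : Finset (EdgeZ d)) : Prop :=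
  IsCutset d n v w B ∧ ∀ B' ⊂ B, ¬ IsCutset d n v w B'

/-- Adjacency of open sites of site percolation in the box. -/
def siteAdj (d n : ℕ) (η : Vert d → Bool) (a b : Vert d) : Prop :=
  a ∈ boxFinset d n ∧ b ∈ boxFinset d n ∧ η a = true ∧ η b = true ∧ latAdj a b

/-- The open cluster of `v` for site percolation on `B_d(n)`. -/
def siteCluster (d n : ℕ) (η : Vert d → Bool) (v : Vert d) : Finset (Vert d) :=
  (boxFinset d n).filter fun w => Relation.ReflTransGen (siteAdj d n η) v w

/-- Number of lattice edges of the box with both endpoints in `C`. -/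
def siteEdgeCount (d n : ℕ) (C : Finset (Vert d)) : ℕ :=
  ((boxEdgeFinset d n).filter fun e => e.1 ∈ C ∧ edgeSnd e ∈ C).card

def IsSiteCluster (d n : ℕ) (η : Vert d → Bool) (C : Finset (Vert d)) : Prop :=
  ∃ v ∈ boxFinset d n, η v = true ∧ C = siteCluster d n η v

def IsLargestSiteCluster (d n : ℕ) (η : Vert d → Bool) (C : Finset (Vert d)) : Prop :=
  IsSiteCluster d n η C ∧
    ∀ C', IsSiteCluster d n η C' → siteEdgeCount d n C' ≤ siteEdgeCount d n C

/-- The primal edge of `ℤ²` crossing a given edge of the dual lattice `ℤ²_* = ℤ² + (1/2,1/2)`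
(dual vertices are identified with `ℤ²` via `u ↦ u + (1/2,1/2)`). -/
def primalOfDual (f : EdgeZ 2) : EdgeZ 2 :=
  if f.2 = (0 : Fin 2) then (![f.1 0 + 1, f.1 1], 1) else (![f.1 0, f.1 1 + 1], 0)

/-- First-passage weight of the dual edge between the dual vertices `a` and `b`:
`1` if the primal edge crossing it is open, `0` if it is closed. -/
def dualStepWeight (ω : EdgeZ 2 → Bool) (a b : Vert 2) : ℕ :=
  if (∃ i : Fin 2, b = a + unitVec 2 i ∧ ω (primalOfDual (a, i)) = true) ∨
     (∃ i : Fin 2, a = b + unitVec 2 i ∧ ω (primalOfDual (b, i)) = true) then 1 else 0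

/-- Total first-passage cost of a dual lattice path, given as the list of its vertices. -/
def pathCost (ω : EdgeZ 2 → Bool) (l : List (Vert 2)) : ℕ :=
  ((l.zip l.tail).map fun q => dualStepWeight ω q.1 q.2).sum

/-- `l` is a lattice path from `x` to `y`. -/
def IsLatticePath (l : List (Vert 2)) (x y : Vert 2) : Prop :=
  l.Chain' latAdj ∧ l.head? = some x ∧ l.getLast? = some y

/-- First-passage percolation distance on the dual lattice:
`D(x,y) = min { Σᵢ X(eᵢ*) : e₁*,…,e_k* a dual path from x to y }`. -/
def fppDist (ω : EdgeZ 2 → Bool) (x y : Vert 2) : ℕ :=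
  sInf {m : ℕ | ∃ l : List (Vert 2), IsLatticePath l x y ∧ pathCost ω l = m}

end

open Finset

section Box

variable {d n : ℕ}

lemma mem_boxFinset {x : Vert d} : x ∈ boxFinset d n ↔ ∀ i, -(n : ℤ) ≤ x i ∧ x i ≤ n := by
  simp [boxFinset, Fintype.mem_piFinset]

lemma mem_boxEdgeFinset {e : EdgeZ d} :
    e ∈ boxEdgeFinset d n ↔ e.1 ∈ boxFinset d n ∧ edgeSnd e ∈ boxFinset d n := by
  simp [boxEdgeFinset]

lemma edgeSnd_mk (x : Vert d) (i : Fin d) : edgeSnd (x, i) = x + unitVec d i := rfl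

lemma add_unitVec_apply (x : Vert d) (i j : Fin d) :
    (x + unitVec d i) j = x j + if j = i then 1 else 0 := rfl

lemma add_unitVec_mem_boxFinset {c : Vert d} {i j : Fin d} (hc : c ∈ boxFinset d n)
    (hc' : c + unitVec d i + unitVec d j ∈ boxFinset d n) : c + unitVec d i ∈ boxFinset d n := by
  rw [mem_boxFinset] at *
  intro s
  have h := hc s
  have h' := hc' s
  simp only [add_unitVec_apply] at *
  split_ifs at * <;> omega

lemma card_boxEdgeFinset_le : #(boxEdgeFinset d n) ≤ d * (2 * n + 1) ^ d := by
  calc #(boxEdgeFinset d n) ≤ #(boxFinset d n ×ˢ (univ : Finset (Fin d))) := card_filter_le _ _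
    _ = d * (2 * n + 1) ^ d := by
      rw [card_product, boxFinset, Fintype.card_piFinset, Int.card_Icc,
        show ((n : ℤ) + 1 - -n).toNat = 2 * n + 1 by omega]
      simp [mul_comm]

end Box

lemma Finset.sum_Ico_int_sub_telescope {G : Type*} [AddCommGroup G] (f : ℤ → G) {a b : ℤ}
    (hab : a ≤ b) :
    ∑ t ∈ Ico a b, (f (t + 1) - f t) = f b - f a := by
  induction b, hab using Int.leInduction with
  | base => simp
  | succ b hab ih =>
    rw [Ico_add_one_right_eq_Icc, ← Ico_insert_right hab, sum_insert (by simp), ih]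
    abel

section Potential

variable {d : ℕ} {G : Type*} [AddCommGroup G] (n : ℕ)

def IsBoxCocycle (χ : EdgeZ d → G) : Prop :=
  ∀ (c : Vert d) (i j : Fin d), c ∈ boxFinset d n → c + unitVec d i + unitVec d j ∈ boxFinset d n →
    χ (c, i) + χ (c + unitVec d i, j) = χ (c, j) + χ (c + unitVec d j, i)

def truncVert (x : Vert d) (k : ℕ) : Vert d := fun s => if (s : ℕ) < k then x s else -n

/- `boxPotential n χ x` sums `χ` along the monotone lattice path from `(-n, …, -n)` to `x` that
moves the coordinates to their values one at a time, in increasing order; `segmentSum n χ x j`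
is the straight leg of that path in direction `j`. -/
noncomputable def segmentSum (χ : EdgeZ d → G) (x : Vert d) (j : Fin d) : G :=
  ∑ t ∈ Ico (-(n : ℤ)) (x j), χ (Function.update (truncVert n x j) j t, j)

noncomputable def boxPotential (χ : EdgeZ d → G) (x : Vert d) : G := ∑ j, segmentSum n χ x j

variable {n}

lemma truncVert_of_le {x : Vert d} {k : ℕ} (hk : d ≤ k) : truncVert n x k = x := by
  funext s
  simp [truncVert, s.isLt.trans_le hk]

lemma update_truncVert_self (x : Vert d) (j : Fin d) :
    Function.update (truncVert n x j) j (x j) = truncVert n x (j + 1) := by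
  funext s
  simp only [truncVert, Function.update_apply, Fin.ext_iff]
  split_ifs with h₁ <;> first | rfl | omega | rw [Fin.ext h₁]

lemma update_truncVert_neg (x : Vert d) (j : Fin d) :
    Function.update (truncVert n x j) j (-n) = truncVert n x j := by
  funext s
  simp only [truncVert, Function.update_apply]
  split_ifs with h₁ <;> first | rfl | (subst h₁; omega)

lemma update_truncVert_add_one (x : Vert d) (j : Fin d) (t : ℤ) :
    Function.update (truncVert n x j) j (t + 1) =
      Function.update (truncVert n x j) j t + unitVec d j := by
  funext s
  simp only [truncVert, Function.update_apply, Pi.add_apply, unitVec]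
  split_ifs <;> omega

lemma update_truncVert_add_unitVec_of_le {x : Vert d} {i j : Fin d} (hji : j ≤ i) (t : ℤ) :
    Function.update (truncVert n (x + unitVec d i) j) j t =
      Function.update (truncVert n x j) j t := by
  funext s
  simp only [truncVert, Function.update_apply, Pi.add_apply, unitVec, Fin.le_def] at *
  split_ifs <;> first | rfl | omega

lemma update_truncVert_add_unitVec_of_lt {x : Vert d} {i j : Fin d} (hij : i < j) (t : ℤ) :
    Function.update (truncVert n (x + unitVec d i) j) j t =
      Function.update (truncVert n x j) j t + unitVec d i := by
  funext s
  simp only [truncVert, Function.update_apply, Pi.add_apply, unitVec, Fin.lt_def] at *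
  split_ifs <;> first | rfl | omega

lemma update_truncVert_mem_boxFinset {x : Vert d} (hx : x ∈ boxFinset d n) (j : Fin d) {t : ℤ}
    (ht₁ : -(n : ℤ) ≤ t) (ht₂ : t ≤ n) : Function.update (truncVert n x j) j t ∈ boxFinset d n := by
  rw [mem_boxFinset] at *
  intro s
  have := hx s
  simp only [truncVert, Function.update_apply]
  split_ifs <;> omega

variable {χ : EdgeZ d → G}

lemma segmentSum_add_unitVec_of_lt (x : Vert d) {i j : Fin d} (hji : j < i) :
    segmentSum n χ (x + unitVec d i) j = segmentSum n χ x j := by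
  simp only [segmentSum, add_unitVec_apply, if_neg hji.ne, add_zero,
    update_truncVert_add_unitVec_of_le hji.le]

lemma segmentSum_add_unitVec_self {x : Vert d} {i : Fin d} (hx : -(n : ℤ) ≤ x i) :
    segmentSum n χ (x + unitVec d i) i = segmentSum n χ x i + χ (truncVert n x (i + 1), i) := by
  simp only [segmentSum, update_truncVert_add_unitVec_of_le le_rfl]
  rw [add_unitVec_apply, if_pos rfl, Ico_add_one_right_eq_Icc, ← Ico_insert_right hx,
    sum_insert (by simp), add_comm, update_truncVert_self]

lemma segmentSum_add_unitVec_of_gt (hχ : IsBoxCocycle n χ) {x : Vert d} {i j : Fin d}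
    (hx : (x, i) ∈ boxEdgeFinset d n) (hij : i < j) :
    segmentSum n χ (x + unitVec d i) j - segmentSum n χ x j =
      χ (truncVert n x (j + 1), i) - χ (truncVert n x j, i) := by
  have hx₀ : x ∈ boxFinset d n := (mem_boxEdgeFinset.1 hx).1
  have hx₁ : x + unitVec d i ∈ boxFinset d n := (mem_boxEdgeFinset.1 hx).2
  have hxj := mem_boxFinset.1 hx₀ j
  -- each unit square above the segment trades its two `j`-edges for its two `i`-edges
  have hsquare : ∀ t ∈ Ico (-(n : ℤ)) (x j),
      χ (Function.update (truncVert n x j) j t + unitVec d i, j) -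
          χ (Function.update (truncVert n x j) j t, j) =
        χ (Function.update (truncVert n x j) j (t + 1), i) -
          χ (Function.update (truncVert n x j) j t, i) := by
    intro t ht
    obtain ⟨ht₁, ht₂⟩ := mem_Ico.1 ht
    have hc := hχ _ i j (update_truncVert_mem_boxFinset hx₀ j ht₁ (by omega)) (by
      rw [← update_truncVert_add_unitVec_of_lt hij, ← update_truncVert_add_one]
      exact update_truncVert_mem_boxFinset hx₁ j (by omega) (by omega))
    rw [update_truncVert_add_one, sub_eq_sub_iff_add_eq_add, add_comm, hc, add_comm]
  rw [segmentSum, segmentSum, add_unitVec_apply, if_neg hij.ne', add_zero, ← sum_sub_distrib]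
  simp only [update_truncVert_add_unitVec_of_lt hij]
  rw [sum_congr rfl hsquare,
    sum_Ico_int_sub_telescope (fun t => χ (Function.update (truncVert n x j) j t, i)) hxj.1,
    update_truncVert_self, update_truncVert_neg]

theorem IsBoxCocycle.boxPotential_sub (hχ : IsBoxCocycle n χ) {e : EdgeZ d}
    (he : e ∈ boxEdgeFinset d n) : boxPotential n χ (edgeSnd e) - boxPotential n χ e.1 = χ e := by
  obtain ⟨x, i⟩ := e
  have hxi := (mem_boxFinset.1 (mem_boxEdgeFinset.1 he).1 i).1
  let g : ℕ → G := fun k => if k ≤ i then 0 else χ (truncVert n x k, i)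
  have hstep : ∀ j : Fin d,
      segmentSum n χ (x + unitVec d i) j - segmentSum n χ x j = g (j + 1) - g j := by
    intro j
    rcases lt_trichotomy j i with hji | rfl | hij
    · rw [segmentSum_add_unitVec_of_lt x hji, sub_self]
      have : (j : ℕ) + 1 ≤ i := hji
      simp [g, this, hji.le]
    · simp [g, segmentSum_add_unitVec_self hxi]
    · have : ¬ (j : ℕ) ≤ i := not_le.2 hij
      simp [g, segmentSum_add_unitVec_of_gt hχ he hij, this, not_le.2 (Nat.lt_succ_of_lt hij)]
  rw [edgeSnd_mk, boxPotential, boxPotential, ← sum_sub_distrib, sum_congr rfl fun j _ => hstep j,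
    Fin.sum_univ_eq_sum_range (fun k => g (k + 1) - g k), sum_range_sub]
  simp [g, truncVert_of_le le_rfl, not_le.2 i.isLt]

theorem isBoxCocycle_of_sub_eq {φ : Vert d → G}
    (hφ : ∀ e ∈ boxEdgeFinset d n, φ (edgeSnd e) - φ e.1 = χ e) : IsBoxCocycle n χ := by
  intro c i j hc hc'
  have hci := add_unitVec_mem_boxFinset hc hc'
  have hcj := add_unitVec_mem_boxFinset hc (by rwa [add_right_comm] at hc')
  rw [← hφ (c, i) (mem_boxEdgeFinset.2 ⟨hc, hci⟩), ← hφ (c, j) (mem_boxEdgeFinset.2 ⟨hc, hcj⟩),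
    ← hφ (c + unitVec d i, j) (mem_boxEdgeFinset.2 ⟨hci, hc'⟩),
    ← hφ (c + unitVec d j, i) (mem_boxEdgeFinset.2 ⟨hcj, by rwa [edgeSnd, add_right_comm]⟩)]
  simp only [edgeSnd_mk, add_right_comm c (unitVec d j)]
  abel

end Potential

section SquareAdj

variable {d : ℕ}

def OnSquare (c : Vert d) (i j : Fin d) (e : EdgeZ d) : Prop :=
  e = (c, i) ∨ e = (c, j) ∨ e = (c + unitVec d i, j) ∨ e = (c + unitVec d j, i)

def SquareAdj (e f : EdgeZ d) : Prop := ∃ c i j, OnSquare c i j e ∧ OnSquare c i j f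

lemma squareAdj_symm {e f : EdgeZ d} (h : SquareAdj e f) : SquareAdj f e :=
  let ⟨c, i, j, he, hf⟩ := h
  ⟨c, i, j, hf, he⟩

theorem IsBoxCocycle.restrict {G : Type*} [AddCommGroup G] {n : ℕ} {χ : EdgeZ d → G}
    (hχ : IsBoxCocycle n χ) (C : Set (EdgeZ d))
    (hC : ∀ g g', SquareAdj g g' → g ∈ C → χ g' ≠ 0 → g' ∈ C) :
    IsBoxCocycle n fun e => if e ∈ C then χ e else 0 := by
  intro c i j hc hc'
  have h₁ : OnSquare c i j (c, i) := .inl rfl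
  have h₂ : OnSquare c i j (c + unitVec d i, j) := .inr (.inr (.inl rfl))
  have h₃ : OnSquare c i j (c, j) := .inr (.inl rfl)
  have h₄ : OnSquare c i j (c + unitVec d j, i) := .inr (.inr (.inr rfl))
  by_cases hsq : ∃ g, OnSquare c i j g ∧ g ∈ C
  · obtain ⟨g, hg, hgC⟩ := hsq
    have hχ_eq : ∀ g', OnSquare c i j g' → (if g' ∈ C then χ g' else 0) = χ g' := fun g' hg' => by
      split_ifs with hg'C
      · rfl
      · by_contra h
        exact hg'C (hC g g' ⟨c, i, j, hg, hg'⟩ hgC (Ne.symm h))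
    simp only [hχ_eq _ h₁, hχ_eq _ h₂, hχ_eq _ h₃, hχ_eq _ h₄]
    exact hχ c i j hc hc'
  · have hχ_eq : ∀ g, OnSquare c i j g → (if g ∈ C then χ g else 0) = 0 := fun g hg =>
      if_neg fun hgC => hsq ⟨g, hg, hgC⟩
    simp only [hχ_eq _ h₁, hχ_eq _ h₂, hχ_eq _ h₃, hχ_eq _ h₄]

end SquareAdj

section Cutset

variable {d n : ℕ} {B : Finset (EdgeZ d)} {x y : Vert d}

lemma avoidConn_symm (h : avoidConn d n B x y) : avoidConn d n B y x :=
  Relation.ReflTransGen.mono (fun _ _ ⟨e, he, heB, h⟩ => ⟨e, he, heB, h.symm⟩) _ _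
    (Relation.ReflTransGen.swap _ _ h)

lemma avoidConn_fst_iff_snd {e : EdgeZ d} (he : e ∈ boxEdgeFinset d n) (heB : e ∉ B) :
    avoidConn d n B x e.1 ↔ avoidConn d n B x (edgeSnd e) :=
  ⟨fun h => h.tail ⟨e, he, heB, .inl ⟨rfl, rfl⟩⟩, fun h => h.tail ⟨e, he, heB, .inr ⟨rfl, rfl⟩⟩⟩

lemma avoidConn_erase {e : EdgeZ d} (h : avoidConn d n (B.erase e) x y) :
    avoidConn d n B x y ∨ avoidConn d n B x e.1 ∨ avoidConn d n B x (edgeSnd e) := by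
  induction h using Relation.ReflTransGen.head_induction_on with
  | refl => exact .inl .refl
  | head hstep _ ih =>
    obtain ⟨f, hf, hfB, hends⟩ := hstep
    by_cases hfe : f = e
    · subst hfe
      rcases hends with ⟨rfl, -⟩ | ⟨-, rfl⟩
      · exact .inr (.inl .refl)
      · exact .inr (.inr .refl)
    · have hstep' : avoidConn d n B _ _ :=
        .single ⟨f, hf, fun h => hfB (mem_erase.2 ⟨hfe, h⟩), hends⟩
      exact ih.imp hstep'.trans (Or.imp hstep'.trans hstep'.trans)

lemma avoidConn_apply_eq {G : Type*} {φ : Vert d → G}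
    (hφ : ∀ e ∈ boxEdgeFinset d n, e ∉ B → φ e.1 = φ (edgeSnd e)) (h : avoidConn d n B x y) :
    φ x = φ y := by
  induction h with
  | refl => rfl
  | tail _ hstep ih =>
    obtain ⟨e, he, heB, ⟨rfl, rfl⟩ | ⟨rfl, rfl⟩⟩ := hstep
    · exact ih.trans (hφ e he heB)
    · exact ih.trans (hφ e he heB).symm

end Cutset

namespace IsMinimalCutset

variable {d n : ℕ} {v w : Vert d} {B : Finset (EdgeZ d)} {e : EdgeZ d}

lemma not_avoidConn_both (hB : IsMinimalCutset d n v w B) {x : Vert d}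
    (hv : avoidConn d n B v x) (hw : avoidConn d n B w x) : False :=
  hB.1.2 (hv.trans (avoidConn_symm hw))

theorem sides (hB : IsMinimalCutset d n v w B) (he : e ∈ B) :
    (avoidConn d n B v e.1 ∧ avoidConn d n B w (edgeSnd e)) ∨
      (avoidConn d n B v (edgeSnd e) ∧ avoidConn d n B w e.1) := by
  have herase : avoidConn d n (B.erase e) v w := by
    by_contra h
    exact hB.2 _ (erase_ssubset he) ⟨(erase_subset e B).trans hB.1.1, h⟩
  rcases avoidConn_erase herase with h | hv | hv
  · exact absurd h hB.1.2
  all_goals rcases avoidConn_erase (avoidConn_symm herase) with h | hw | hw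
  all_goals first
    | exact absurd (avoidConn_symm h) hB.1.2
    | exact (hB.not_avoidConn_both hv hw).elim
    | tauto

lemma indicator_eq_sub (hB : IsMinimalCutset d n v w B) (he : e ∈ boxEdgeFinset d n) :
    (if e ∈ B then 1 else 0 : ZMod 2) =
      (if avoidConn d n B v (edgeSnd e) then 1 else 0) -
        (if avoidConn d n B v e.1 then 1 else 0) := by
  by_cases heB : e ∈ B
  · rcases hB.sides heB with ⟨hv, hw⟩ | ⟨hv, hw⟩
    · have hv' : ¬ avoidConn d n B v (edgeSnd e) := fun h => hB.not_avoidConn_both h hw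
      simp [heB, hv, hv']
    · have hv' : ¬ avoidConn d n B v e.1 := fun h => hB.not_avoidConn_both h hw
      simp [heB, hv, hv']
  · simp [heB, avoidConn_fst_iff_snd he heB]

lemma sub_eq_or_eq_neg {G : Type*} [AddCommGroup G] (hB : IsMinimalCutset d n v w B)
    {φ : Vert d → G} (hφ : ∀ e ∈ boxEdgeFinset d n, e ∉ B → φ e.1 = φ (edgeSnd e)) (he : e ∈ B) :
    φ (edgeSnd e) - φ e.1 = φ w - φ v ∨ φ (edgeSnd e) - φ e.1 = -(φ w - φ v) := by
  rcases hB.sides he with ⟨hv, hw⟩ | ⟨hv, hw⟩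
  · left; rw [avoidConn_apply_eq hφ hv, avoidConn_apply_eq hφ hw]
  · right; rw [avoidConn_apply_eq hφ hv, avoidConn_apply_eq hφ hw, neg_sub]

end IsMinimalCutset

theorem IsMinimalCutset.connectedOn_squareAdj {d n : ℕ} {v w : Vert d} {B : Finset (EdgeZ d)}
    (hB : IsMinimalCutset d n v w B) (hne : B.Nonempty) : ConnectedOn SquareAdj B := by
  refine ⟨hne, fun e₀ he₀ f₀ hf₀ => ?_⟩
  by_contra hf
  let χB : EdgeZ d → ZMod 2 := fun e => if e ∈ B then 1 else 0
  let C : Set (EdgeZ d) :=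
    {e | Relation.ReflTransGen (fun a b => a ∈ B ∧ b ∈ B ∧ SquareAdj a b) e₀ e}
  let χ : EdgeZ d → ZMod 2 := fun e => if e ∈ C then χB e else 0
  have hχ : IsBoxCocycle n χ := by
    refine IsBoxCocycle.restrict (isBoxCocycle_of_sub_eq
      (φ := fun x => if avoidConn d n B v x then 1 else 0) fun e he =>
        (hB.indicator_eq_sub he).symm) C fun g g' hgg' hg hg' => ?_
    have hg'B : g' ∈ B := by by_contra h; simp [h] at hg'
    have hgB : g ∈ B := by
      rcases Relation.ReflTransGen.cases_tail hg with h | ⟨_, _, hstep⟩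
      · exact h ▸ he₀
      · exact hstep.2.1
    exact Relation.ReflTransGen.tail hg ⟨hgB, hg'B, hgg'⟩
  set φ := boxPotential n χ
  have hφ : ∀ e ∈ boxEdgeFinset d n, φ (edgeSnd e) - φ e.1 = χ e := fun _ => hχ.boxPotential_sub
  have hφB : ∀ e ∈ boxEdgeFinset d n, e ∉ B → φ e.1 = φ (edgeSnd e) :=
    fun e he heB => (sub_eq_zero.1 ((hφ e he).trans (by simp [χ, χB, heB]))).symm
  have h₀ := hB.sub_eq_or_eq_neg hφB he₀
  have h₁ := hB.sub_eq_or_eq_neg hφB hf₀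
  rw [hφ _ (hB.1.1 he₀), show χ e₀ = 1 by simp [χ, χB, C, he₀, Relation.ReflTransGen.refl]] at h₀
  rw [hφ _ (hB.1.1 hf₀), show χ f₀ = 0 by simp [χ, C, hf]] at h₁
  have hvw : φ w - φ v = 0 := h₁.elim Eq.symm fun h => neg_eq_zero.1 h.symm
  rw [hvw, neg_zero, or_self] at h₀
  exact one_ne_zero h₀

lemma Relation.ReflTransGen.exists_step_out {α : Type*} {r : α → α → Prop} {S : Set α} {a b : α}
    (h : Relation.ReflTransGen r a b) (ha : a ∈ S) (hb : b ∉ S) : ∃ x ∈ S, ∃ y ∉ S, r x y := by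
  induction h with
  | refl => exact absurd ha hb
  | @tail c b _ hcb ih =>
    by_cases hc : c ∈ S
    · exact ⟨c, hc, b, hb, hcb⟩
    · exact ih hc

lemma List.IsChain.insert_detour {α : Type*} {R : α → α → Prop} {l₁ l₂ : List α} {a b : α}
    (h : (l₁ ++ a :: l₂).IsChain R) (hab : R a b) (hba : R b a) :
    (l₁ ++ a :: b :: a :: l₂).IsChain R := by
  simp only [List.isChain_append, List.isChain_cons_cons, List.head?_cons] at h ⊢
  tauto

section Counting

variable {α : Type*} [DecidableEq α]

def walks (N : α → Finset α) : α → ℕ → Finset (List α)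
  | a, 0 => {[a]}
  | a, k + 1 => (N a).biUnion fun b => (walks N b k).image (a :: ·)

lemma card_walks_le {N : α → Finset α} {Δ : ℕ} (hN : ∀ a, #(N a) ≤ Δ) (a : α) (k : ℕ) :
    #(walks N a k) ≤ Δ ^ k := by
  induction k generalizing a with
  | zero => simp [walks]
  | succ k ih =>
    rw [walks, pow_succ']
    exact (card_biUnion_le_card_mul _ _ _ fun b _ => card_image_le.trans (ih b)).trans
      (Nat.mul_le_mul_right _ (hN a))

lemma mem_walks {N : α → Finset α} {l : List α} {a : α} {k : ℕ}
    (hl : l.IsChain fun x y => y ∈ N x) (ha : l.head? = some a) (hk : l.length = k + 1) :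
    l ∈ walks N a k := by
  induction k generalizing l a with
  | zero =>
    obtain ⟨x, rfl⟩ := List.length_eq_one_iff.1 hk
    simp_all [walks]
  | succ k ih =>
    obtain ⟨x, y, l, rfl⟩ : ∃ x y l', l = x :: y :: l' := by
      match l, hk with
      | x :: y :: l', _ => exact ⟨x, y, l', rfl⟩
    simp only [List.head?_cons, Option.some.injEq] at ha
    subst ha
    rw [List.isChain_cons_cons] at hl
    exact mem_biUnion.2 ⟨y, hl.1, mem_image.2 ⟨_, ih hl.2 rfl (by simpa using hk), rfl⟩⟩

variable {R : α → α → Prop}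

/- Grow the walk one new vertex at a time, by a detour along an edge leaving the vertices
visited so far; each detour adds two steps. -/
theorem ConnectedOn.exists_cover_walk (hR : ∀ a b, R a b → R b a) {A : Finset α}
    (hA : ConnectedOn R A) {a : α} (ha : a ∈ A) :
    ∃ l : List α, l.IsChain R ∧ l.head? = some a ∧ l.toFinset = A ∧ l.length = 2 * #A - 1 := by
  have grow : ∀ k, k < #A → ∃ l : List α, l.IsChain R ∧ l.head? = some a ∧
      l.toFinset ⊆ A ∧ #l.toFinset = k + 1 ∧ l.length = 2 * k + 1 := by
    intro k
    induction k with
    | zero => exact fun _ => ⟨[a], by simp, rfl, by simpa using ha, by simp, rfl⟩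
    | succ k ih =>
      intro hk
      obtain ⟨l, hchain, hhead, hsub, hcard, hlen⟩ := ih (by omega)
      obtain ⟨x, hxA, hxl⟩ := exists_of_ssubset (ssubset_of_subset_of_ne hsub (by
        rintro rfl; omega))
      obtain ⟨u, hu, b, hb, huA, hbA, hub⟩ :=
        (hA.2 a ha x hxA).exists_step_out (S := ↑l.toFinset)
          (by simpa using List.mem_of_mem_head? hhead) hxl
      obtain ⟨l₁, l₂, rfl⟩ := List.append_of_mem (List.mem_toFinset.1 hu)
      have htf : (l₁ ++ u :: b :: u :: l₂).toFinset = insert b (l₁ ++ u :: l₂).toFinset := by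
        ext y
        simp only [List.mem_toFinset, List.mem_append, List.mem_cons, mem_insert]
        tauto
      refine ⟨l₁ ++ u :: b :: u :: l₂, hchain.insert_detour hub (hR _ _ hub), ?_,
        htf ▸ insert_subset hbA hsub, ?_, ?_⟩
      · simpa [List.head?_append] using hhead
      · rw [htf, card_insert_of_notMem hb, hcard]
      · simp only [List.length_append, List.length_cons] at hlen ⊢
        omega
  have hpos := card_pos.2 hA.1
  obtain ⟨l, hchain, hhead, hsub, hcard, hlen⟩ := grow (#A - 1) (by omega)
  exact ⟨l, hchain, hhead, eq_of_subset_of_card_le hsub (by omega), by omega⟩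

theorem card_filter_connectedOn_le (N : α → Finset α) {Δ : ℕ} (hN : ∀ a, #(N a) ≤ Δ)
    (hRN : ∀ a b, R a b → b ∈ N a) (hR : ∀ a b, R a b → R b a) (U : Finset α) (m : ℕ) :
    #{A ∈ U.powerset | #A = m ∧ ConnectedOn R A} ≤ #U * Δ ^ (2 * m - 2) := by
  calc #{A ∈ U.powerset | #A = m ∧ ConnectedOn R A}
      ≤ #((U.biUnion fun a => walks N a (2 * m - 2)).image List.toFinset) := by
        refine card_le_card fun A hA => ?_
        obtain ⟨hAU, rfl, hconn⟩ := by simpa using hA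
        obtain ⟨a, ha⟩ := hconn.1
        obtain ⟨l, hchain, hhead, rfl, hlen⟩ := hconn.exists_cover_walk hR ha
        have : 0 < #l.toFinset := card_pos.2 hconn.1
        exact mem_image.2 ⟨l, mem_biUnion.2 ⟨a, hAU ha,
          mem_walks (hchain.imp fun x y => hRN x y) hhead (by omega)⟩, rfl⟩
    _ ≤ #(U.biUnion fun a => walks N a (2 * m - 2)) := card_image_le
    _ ≤ #U * Δ ^ (2 * m - 2) := card_biUnion_le_card_mul _ _ _ fun a _ => card_walks_le hN a _

end Counting

section Percolation

variable {d n : ℕ} {p : ℝ}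

noncomputable def extendByFalse (d n : ℕ) (ω : {e // e ∈ boxEdgeFinset d n} → Bool) (e : EdgeZ d) : Bool :=
  if h : e ∈ boxEdgeFinset d n then ω ⟨e, h⟩ else false

lemma bondMeasure_eq_map (d n : ℕ) (p : ℝ) :
    bondMeasure d n p = (Measure.pi fun _ => bern p).map (extendByFalse d n) := rfl

lemma measurable_extendByFalse (d n : ℕ) : Measurable (extendByFalse d n) := by
  refine measurable_pi_lambda _ fun e => ?_
  unfold extendByFalse
  split_ifs
  · exact measurable_pi_apply _
  · exact measurable_const

instance (d n : ℕ) (p : ℝ) : IsProbabilityMeasure (bondMeasure d n p) :=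
  Measure.isProbabilityMeasure_map (measurable_extendByFalse d n).aemeasurable

lemma bern_false (hp₀ : 0 ≤ p) (hp₁ : p ≤ 1) : bern p {false} = ENNReal.ofReal (1 - p) := by
  rw [bern, PMF.toMeasure_apply_singleton _ _ (measurableSet_singleton _)]
  change ((1 - min p.toNNReal 1 : NNReal) : ℝ≥0∞) = _
  rw [min_eq_left (Real.toNNReal_le_one.2 hp₁), ENNReal.ofReal_sub _ hp₀]
  simp [ENNReal.ofReal]

theorem bondMeasure_forall_closed (hp₀ : 0 ≤ p) (hp₁ : p ≤ 1) {K : Finset (EdgeZ d)}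
    (hK : K ⊆ boxEdgeFinset d n) :
    bondMeasure d n p {ω | ∀ e ∈ K, ω e = false} = ENNReal.ofReal (1 - p) ^ #K := by
  have hmeas : MeasurableSet {ω : EdgeZ d → Bool | ∀ e ∈ K, ω e = false} := by
    simp only [Set.ofPred_forall]
    exact .biInter K.countable_toSet fun e _ => measurableSet_eq_fun (measurable_pi_apply e)
      measurable_const
  have hpre : extendByFalse d n ⁻¹' {ω | ∀ e ∈ K, ω e = false} =
      Set.univ.pi fun e : {e // e ∈ boxEdgeFinset d n} =>
        if (e : EdgeZ d) ∈ K then ({false} : Set Bool) else Set.univ := by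
    ext ω
    simp only [Set.mem_preimage, Set.mem_ofPred_eq, Set.mem_pi, Set.mem_univ, true_implies,
      extendByFalse]
    constructor
    · intro h e
      split_ifs with he
      · simpa [e.2] using h e he
      · trivial
    · intro h e he
      simpa [hK he, he] using h ⟨e, hK he⟩
  rw [bondMeasure_eq_map, Measure.map_apply (measurable_extendByFalse d n) hmeas, hpre,
    Measure.pi_pi]
  simp only [apply_ite, bern_false hp₀ hp₁, measure_univ]
  rw [prod_coe_sort (boxEdgeFinset d n) fun e => if e ∈ K then ENNReal.ofReal (1 - p) else 1,
    prod_ite_mem, inter_eq_right.2 hK, prod_const]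

theorem bondMeasure_fewOpen_le (hp₀ : 0 ≤ p) (hp₁ : p ≤ 1) {A : Finset (EdgeZ d)}
    (hA : A ⊆ boxEdgeFinset d n) :
    bondMeasure d n p {ω | 2 * #{e ∈ A | ω e = true} < #A} ≤
      ENNReal.ofReal (2 * √(1 - p)) ^ #A := by
  set k := #A - #A / 2 with hk
  have hsub : {ω : EdgeZ d → Bool | 2 * #{e ∈ A | ω e = true} < #A} ⊆
      ⋃ K ∈ A.powersetCard k, {ω | ∀ e ∈ K, ω e = false} := by
    intro ω (hω : 2 * #{e ∈ A | ω e = true} < #A)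
    have hsplit := card_filter_add_card_filter_not (s := A) fun e => ω e = true
    obtain ⟨K, hK, hKcard⟩ := exists_subset_card_eq (s := {e ∈ A | ¬ ω e = true}) (n := k)
      (by omega)
    refine Set.mem_biUnion (mem_powersetCard.2 ⟨hK.trans (filter_subset _ _), hKcard⟩) ?_
    intro e he
    simpa using (mem_filter.1 (hK he)).2
  have hq : ENNReal.ofReal (1 - p) = ENNReal.ofReal √(1 - p) ^ 2 := by
    rw [← ENNReal.ofReal_pow (Real.sqrt_nonneg _), Real.sq_sqrt (by linarith)]
  calc bondMeasure d n p {ω | 2 * #{e ∈ A | ω e = true} < #A}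
      ≤ ∑ K ∈ A.powersetCard k, bondMeasure d n p {ω | ∀ e ∈ K, ω e = false} :=
        (measure_mono hsub).trans (measure_biUnion_finset_le _ _)
    _ = (#A).choose k * ENNReal.ofReal (1 - p) ^ k := by
        rw [sum_congr rfl fun K hK => by
          rw [bondMeasure_forall_closed hp₀ hp₁ ((mem_powersetCard.1 hK).1.trans hA),
            (mem_powersetCard.1 hK).2], sum_const, card_powersetCard, nsmul_eq_mul]
    _ ≤ 2 ^ #A * ENNReal.ofReal √(1 - p) ^ #A := by
        rw [hq, ← pow_mul]
        exact mul_le_mul' (by exact_mod_cast Nat.choose_le_two_pow _ _)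
          (pow_le_pow_of_le_one zero_le
            (ENNReal.ofReal_le_one.2 (Real.sqrt_le_one.2 (by linarith))) (by omega))
    _ = ENNReal.ofReal (2 * √(1 - p)) ^ #A := by
        rw [ENNReal.ofReal_mul zero_le_two, mul_pow, ENNReal.ofReal_ofNat]

end Percolation

section LatticeCount

variable {d n : ℕ}

noncomputable def edgeNbhd (e : EdgeZ d) : Finset (EdgeZ d) :=
  (Fintype.piFinset fun t => Icc (e.1 t - 1) (e.1 t + 1)) ×ˢ univ

lemma card_edgeNbhd (e : EdgeZ d) : #(edgeNbhd e) = 3 ^ d * d := by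
  simp [edgeNbhd, Fintype.card_piFinset, show ∀ x : ℤ, (x + 1 + 1 - (x - 1)).toNat = 3 by omega]

lemma mem_edgeNbhd_of_squareAdj {e f : EdgeZ d} (h : SquareAdj e f) : f ∈ edgeNbhd e := by
  obtain ⟨c, i, j, he, hf⟩ := h
  have hcoord : ∀ g, OnSquare c i j g → ∀ t, g.1 t = c t ∨ g.1 t = c t + 1 := by
    rintro g (rfl | rfl | rfl | rfl) t <;> simp [unitVec, em']
  simp only [edgeNbhd, mem_product, Fintype.mem_piFinset, mem_Icc, mem_univ, and_true]
  intro t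
  rcases hcoord e he t with h₁ | h₁ <;> rcases hcoord f hf t with h₂ | h₂ <;> omega

theorem card_connectedOn_squareAdj_le (m : ℕ) :
    #{A ∈ (boxEdgeFinset d n).powerset | #A = m ∧ ConnectedOn SquareAdj A} ≤
      #(boxEdgeFinset d n) * (3 ^ d * d) ^ (2 * m - 2) :=
  card_filter_connectedOn_le edgeNbhd (fun e => (card_edgeNbhd e).le)
    (fun _ _ => mem_edgeNbhd_of_squareAdj) (fun _ _ => squareAdj_symm) _ m

end LatticeCount

theorem tendsto_measure_one_of_compl_le {ι Ω : Type*} [MeasurableSpace Ω] {l : Filter ι}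
    {μ : ι → Measure Ω} [∀ i, IsProbabilityMeasure (μ i)] {s : ι → Set Ω} {f : ι → ℝ≥0∞}
    (hf : Tendsto f l (nhds 0)) (h : ∀ᶠ i in l, μ i (s i)ᶜ ≤ f i) :
    Tendsto (fun i => μ i (s i)) l (nhds 1) := by
  refine tendsto_of_tendsto_of_tendsto_of_le_of_le' (g := fun i => 1 - f i) ?_ tendsto_const_nhds
    ?_ (.of_forall fun i => prob_le_one)
  · simpa using ENNReal.Tendsto.sub tendsto_const_nhds hf (.inl ENNReal.one_ne_top)
  · filter_upwards [h] with i hi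
    rw [tsub_le_iff_right]
    calc 1 = μ i (s i ∪ (s i)ᶜ) := by rw [Set.union_compl_self, measure_univ]
      _ ≤ μ i (s i) + μ i (s i)ᶜ := measure_union_le _ _
      _ ≤ μ i (s i) + f i := by gcongr

lemma exists_lt_one_forall_of_eventually {P : ℝ → Prop} (h : ∀ᶠ p in nhds 1, P p) :
    ∃ pstar < 1, ∀ p, pstar < p → p ≤ 1 → P p := by
  obtain ⟨ε, hε, hP⟩ := Metric.eventually_nhds_iff.1 h
  refine ⟨1 - ε, by linarith, fun p hp hp₁ => hP ?_⟩
  rw [Real.dist_eq, abs_lt]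
  constructor <;> linarith

lemma card_boxEdgeFinset_add_one_le {d n : ℕ} (hn : 1 ≤ n) :
    #(boxEdgeFinset d n) + 1 ≤ (d * 3 ^ d + 1) * n ^ d := by
  have h₁ : (2 * n + 1) ^ d ≤ 3 ^ d * n ^ d := by
    rw [← mul_pow]
    exact Nat.pow_le_pow_left (by omega) d
  have h₂ : 1 ≤ n ^ d := Nat.one_le_pow _ _ hn
  calc #(boxEdgeFinset d n) + 1 ≤ d * (3 ^ d * n ^ d) + n ^ d :=
        add_le_add (card_boxEdgeFinset_le.trans (Nat.mul_le_mul_left d h₁)) h₂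
    _ = (d * 3 ^ d + 1) * n ^ d := by ring

def connectedHalfOpenEvent (d n : ℕ) (M : ℝ) : Set (EdgeZ d → Bool) :=
  {ω | ∀ A ⊆ boxEdgeFinset d n, ConnectedOn SquareAdj A → M ≤ #A →
    #A ≤ 2 * #{e ∈ A | ω e = true}}

lemma IsMinimalCutset.half_le_card_open {d n : ℕ} {v w : Vert d} {B : Finset (EdgeZ d)} {M : ℝ}
    {ω : EdgeZ d → Bool} (hB : IsMinimalCutset d n v w B) (hω : ω ∈ connectedHalfOpenEvent d n M)
    (hM : M ≤ #B) : 1 / 2 * (#B : ℝ) ≤ #{e ∈ B | ω e = true} := by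
  rcases B.eq_empty_or_nonempty with rfl | hne
  · simp
  · have : (#B : ℝ) ≤ 2 * #{e ∈ B | ω e = true} := by
      exact_mod_cast hω B hB.1.1 (hB.connectedOn_squareAdj hne) hM
    linarith

theorem bondMeasure_compl_connectedHalfOpenEvent_le {d n : ℕ} {p : ℝ} (hp₀ : 0 ≤ p) (hp₁ : p ≤ 1)
    (M : ℝ) :
    bondMeasure d n p (connectedHalfOpenEvent d n M)ᶜ ≤
      ENNReal.ofReal (∑ m ∈ range (#(boxEdgeFinset d n) + 1) with M ≤ ((m : ℕ) : ℝ),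
        #(boxEdgeFinset d n) * ((3 ^ d * d : ℕ) : ℝ) ^ (2 * m - 2) * (2 * √(1 - p)) ^ m) := by
  set U := boxEdgeFinset d n
  set θ := 2 * √(1 - p)
  set F := {A ∈ U.powerset | M ≤ #A ∧ ConnectedOn SquareAdj A}
  have hsub : (connectedHalfOpenEvent d n M)ᶜ ⊆
      ⋃ A ∈ F, {ω | 2 * #{e ∈ A | ω e = true} < #A} := by
    intro ω hω
    simp only [connectedHalfOpenEvent, Set.mem_compl_iff, Set.mem_ofPred_eq, not_forall,
      not_le] at hω
    obtain ⟨A, hAU, hconn, hM, hA⟩ := hω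
    exact Set.mem_biUnion (by simp [F, U, hAU, hconn, hM]) hA
  have hfiber : ∀ m ∈ range (#U + 1), ∑ A ∈ F with #A = m, θ ^ #A ≤
      if M ≤ m then #U * ((3 ^ d * d : ℕ) : ℝ) ^ (2 * m - 2) * θ ^ m else 0 := by
    intro m _
    split_ifs with hm
    · rw [sum_congr rfl fun A hA => by rw [(mem_filter.1 hA).2], sum_const, nsmul_eq_mul]
      gcongr
      exact_mod_cast (card_le_card fun A hA => by simp_all [F, U]).trans
        (card_connectedOn_squareAdj_le m)
    · refine (sum_eq_zero fun A hA => ?_).le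
      simp only [F, mem_filter] at hA
      exact absurd (hA.2 ▸ hA.1.2.1) hm
  calc bondMeasure d n p (connectedHalfOpenEvent d n M)ᶜ
      ≤ ∑ A ∈ F, bondMeasure d n p {ω | 2 * #{e ∈ A | ω e = true} < #A} :=
        (measure_mono hsub).trans (measure_biUnion_finset_le _ _)
    _ ≤ ∑ A ∈ F, ENNReal.ofReal (θ ^ #A) := sum_le_sum fun A hA =>
        (bondMeasure_fewOpen_le hp₀ hp₁ (mem_powerset.1 (mem_filter.1 hA).1)).trans_eq
          (ENNReal.ofReal_pow (by positivity) _).symm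
    _ = ENNReal.ofReal (∑ A ∈ F, θ ^ #A) :=
        (ENNReal.ofReal_sum_of_nonneg fun _ _ => by positivity).symm
    _ ≤ _ := by
      refine ENNReal.ofReal_le_ofReal ?_
      rw [← sum_fiberwise_of_maps_to (g := card) (t := range (#U + 1)) fun A hA =>
        mem_range.2 (Nat.lt_succ_of_le (card_le_card (mem_powerset.1 (mem_filter.1 hA).1))),
        sum_filter]
      exact sum_le_sum hfiber

lemma sum_connected_terms_le {d n E Δ : ℕ} {C θ : ℝ} (hn : 1 ≤ n) (hE : (E + 1 : ℝ) ≤ C * n ^ d)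
    (hθ₀ : 0 ≤ θ) (hθ : ((Δ : ℝ) + 1) ^ 2 * θ ≤ Real.exp (-1)) :
    ∑ m ∈ range (E + 1) with (2 * d + 1) * Real.log n ≤ ((m : ℕ) : ℝ),
      E * (Δ : ℝ) ^ (2 * m - 2) * θ ^ m ≤ C ^ 2 / n := by
  have hn₀ : (0 : ℝ) < n := by exact_mod_cast hn
  set M := (2 * d + 1) * Real.log n
  have hexpM : Real.exp (-M) = 1 / (n : ℝ) ^ (2 * d + 1) := by
    rw [Real.exp_neg, show M = ((2 * d + 1 : ℕ) : ℝ) * Real.log n by push_cast; rfl,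
      Real.exp_nat_mul, Real.exp_log hn₀, one_div]
  have hterm : ∀ m : ℕ, M ≤ m → (Δ : ℝ) ^ (2 * m - 2) * θ ^ m ≤ Real.exp (-M) := by
    intro m hm
    calc (Δ : ℝ) ^ (2 * m - 2) * θ ^ m ≤ (((Δ : ℝ) + 1) ^ 2) ^ m * θ ^ m := by
          rw [← pow_mul]
          gcongr
          · exact (pow_le_pow_left₀ (by positivity) (by linarith) _).trans
              (pow_le_pow_right₀ (by linarith) (by omega))
      _ = (((Δ : ℝ) + 1) ^ 2 * θ) ^ m := (mul_pow _ _ _).symm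
      _ ≤ Real.exp (-1) ^ m := pow_le_pow_left₀ (by positivity) hθ m
      _ = Real.exp (-m) := by rw [← Real.exp_nat_mul]; ring_nf
      _ ≤ Real.exp (-M) := Real.exp_le_exp.2 (by linarith)
  calc ∑ m ∈ range (E + 1) with M ≤ ((m : ℕ) : ℝ), E * (Δ : ℝ) ^ (2 * m - 2) * θ ^ m
      ≤ ∑ m ∈ range (E + 1) with M ≤ ((m : ℕ) : ℝ), (E : ℝ) * Real.exp (-M) := by
        refine sum_le_sum fun m hm => ?_
        rw [mul_assoc]
        exact mul_le_mul_of_nonneg_left (hterm m (mem_filter.1 hm).2) (by positivity)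
    _ ≤ ∑ m ∈ range (E + 1), (E : ℝ) * Real.exp (-M) :=
        sum_le_sum_of_subset_of_nonneg (filter_subset _ _) fun _ _ _ => by positivity
    _ = (E + 1) * E / (n : ℝ) ^ (2 * d + 1) := by simp [hexpM]; ring
    _ ≤ (C * n ^ d) ^ 2 / (n : ℝ) ^ (2 * d + 1) := by
        gcongr
        nlinarith
    _ = C ^ 2 / n := by field_simp; ring

theorem minimal_cutsets_open_edges_general (d : ℕ) :
    ∃ pstar : ℝ, pstar < 1 ∧ ∀ p : ℝ, pstar < p → p ≤ 1 →
      ∃ c₁ c₂ : ℝ, 0 < c₁ ∧ 0 < c₂ ∧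
        Tendsto (fun n : ℕ => bondMeasure d n p
            {ω | ∀ v ∈ boxFinset d n, ∀ w ∈ boxFinset d n, ∀ B : Finset (EdgeZ d),
              IsMinimalCutset d n v w B → c₁ * Real.log n ≤ (B.card : ℝ) →
              c₂ * (B.card : ℝ) ≤ ((B.filter fun e => ω e = true).card : ℝ)})
          atTop (nhds 1) := by
  set K : ℝ := (((3 ^ d * d : ℕ) : ℝ) + 1) ^ 2
  have hnear : ∀ᶠ p in nhds (1 : ℝ), 0 ≤ p ∧ K * (2 * √(1 - p)) ≤ Real.exp (-1) := by
    have hcont : Tendsto (fun p : ℝ => K * (2 * √(1 - p))) (nhds 1) (nhds 0) :=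
      (by fun_prop : Continuous fun p : ℝ => K * (2 * √(1 - p))).tendsto' 1 0 (by simp)
    exact ((lt_mem_nhds one_pos).mono fun _ => le_of_lt).and
      (hcont.eventually (ge_mem_nhds (Real.exp_pos _)))
  obtain ⟨pstar, hpstar, hp⟩ := exists_lt_one_forall_of_eventually hnear
  refine ⟨pstar, hpstar, fun p hp₁ hp₂ => ⟨2 * d + 1, 1 / 2, by positivity, by norm_num, ?_⟩⟩
  obtain ⟨hp₀, hθ⟩ := hp p hp₁ hp₂
  refine tendsto_measure_one_of_compl_le
    (f := fun n : ℕ => ENNReal.ofReal (((d * 3 ^ d + 1 : ℕ) : ℝ) ^ 2 / n)) ?_ ?_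
  · simpa using ENNReal.tendsto_ofReal (tendsto_const_div_atTop_nhds_zero_nat _)
  · filter_upwards [eventually_ge_atTop 1] with n hn
    refine (measure_mono (Set.compl_subset_compl.2 ?_)).trans
      ((bondMeasure_compl_connectedHalfOpenEvent_le hp₀ hp₂ ((2 * d + 1) * Real.log n)).trans
        (ENNReal.ofReal_le_ofReal ?_))
    · exact fun ω hω v _ w _ B hB hM => hB.half_le_card_open hω hM
    · exact sum_connected_terms_le hn (by exact_mod_cast card_boxEdgeFinset_add_one_le hn)
        (by positivity) hθ

/-- For `d ≥ 2` there is `p* < 1` such that for `p > p*` there are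
`c₁, c₂ > 0` such that a.a.s. every minimal cutset `B` of `B_d(n)` with `|B| ≥ c₁ log n`
contains at least `c₂ |B|` open edges. -/
theorem minimal_cutsets_open_edges (d : ℕ) (hd : 2 ≤ d) :
    ∃ pstar : ℝ, pstar < 1 ∧ ∀ p : ℝ, pstar < p → p ≤ 1 →
      ∃ c₁ c₂ : ℝ, 0 < c₁ ∧ 0 < c₂ ∧
        Tendsto (fun n : ℕ => bondMeasure d n p
            {ω | ∀ v ∈ boxFinset d n, ∀ w ∈ boxFinset d n, ∀ B : Finset (EdgeZ d),
              IsMinimalCutset d n v w B → c₁ * Real.log n ≤ (B.card : ℝ) →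
              c₂ * (B.card : ℝ) ≤ ((B.filter fun e => ω e = true).card : ℝ)})
          atTop (nhds 1) :=
  minimal_cutsets_open_edges_general d
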